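/- Let ((A,μ),(M,l,r),T) be a relative Rota–Baxter algebra over a field K of characteristic 0, and let (μ₁,l₁,r₁,T₁) and (μ₁′,l₁′,r₁′,T₁′) be two quadruples determining infinitesimal deformations over K[ε] = K[t]/(t²) (i.e. the corresponding ε-extensions form relative Rota–Baxter algebras over K[ε]). Let φ₁ : A → A and ψ₁ : M → M be K-linear maps, and set Φ := id_A + εφ₁, Ψ := id_M + εψ₁. Then (Φ,Ψ) is an isomorphism of K[ε]-relative Rota–Baxter algebras from the deformation given by (μ₁,l₁,r₁,T₁) to the one given by (μ₁′,l₁′,r₁′,T₁′) — that is, Φ is an algebra homomorphism for the deformed products, Ψ satisfies Ψ(a·m) = Φ(a)·Ψ(m) and Ψ(m·a) = Ψ(m)·Φ(a) for the deformed actions, and (T+εT₁′) ∘ Ψ = Φ ∘ (T+εT₁) — if and only if the following hold: (1) μ₁(a,b) − μ₁′(a,b) = aφ₁(b) − φ₁(ab) + φ₁(a)b for all a,b ∈ A; (2) ψ₁(am) + l₁(a,m) = l₁′(a,m) + φ₁(a)m + aψ₁(m) and ψ₁(ma) + r₁(m,a) = r₁′(m,a) + ψ₁(m)a + mφ₁(a)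 for all a ∈ A, m ∈ M; (3) T₁ + φ₁∘T = T₁′ + T∘ψ₁. (These identities say exactly that the two 2-cocycles differ by the coboundary of (φ₁,ψ₁), so equivalence classes of infinitesimal deformations correspond to classes in the second cohomology of the relative Rota–Baxter algebra.) -/
import Mathlib


/-!
Statement 12: `(Φ, Ψ) = (id + εφ₁, id + εψ₁)` is an isomorphism of the `K[ε]`-relative
Rota–Baxter algebras determined by the quadruples `(μ₁,l₁,r₁,T₁)` and `(μ₁′,l₁′,r₁′,T₁′)`
iff the two 2-cocycles differ by the coboundary of `(φ₁, ψ₁)`.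
-/

section

variable {K : Type*} [Field K] [CharZero K]
variable {A : Type*} [NonUnitalRing A] [Module K A] [SMulCommClass K A A] [IsScalarTower K A A]
variable {M : Type*} [AddCommGroup M] [Module K M]

/-- The `K[ε]`-bilinear extension of `μ + εμ₁` on `A[ε] = A × A`. -/
def dMul (μ₁ : A →ₗ[K] A →ₗ[K] A) : A × A → A × A → A × A :=
  fun x y => (x.1 * y.1, x.1 * y.2 + x.2 * y.1 + μ₁ x.1 y.1)

/-- The `K[ε]`-bilinear extension of the left action `l + εl₁`. -/
def dL (l l₁ : A →ₗ[K] M →ₗ[K] M) : A × A → M × M → M × M :=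
  fun x u => (l x.1 u.1, l x.1 u.2 + l x.2 u.1 + l₁ x.1 u.1)

/-- The `K[ε]`-bilinear extension of the right action `r + εr₁`. -/
def dR (r r₁ : M →ₗ[K] A →ₗ[K] M) : M × M → A × A → M × M :=
  fun u x => (r u.1 x.1, r u.2 x.1 + r u.1 x.2 + r₁ u.1 x.1)

/-- The `K[ε]`-linear extension of `T + εT₁ : M[ε] → A[ε]`. -/
def dOp (T T₁ : M →ₗ[K] A) : M × M → A × A :=
  fun u => (T u.1, T u.2 + T₁ u.1)

/-- The `K[ε]`-linear map `id + εφ₁`. -/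
def dPhi {V : Type*} [AddCommGroup V] [Module K V] (φ₁ : V →ₗ[K] V) : V × V → V × V :=
  fun x => (x.1, x.2 + φ₁ x.1)

theorem statement12
    (l : A →ₗ[K] M →ₗ[K] M) (r : M →ₗ[K] A →ₗ[K] M) (T : M →ₗ[K] A)
    -- M is an A-bimodule:
    (hl : ∀ (a b : A) (m : M), l (a * b) m = l a (l b m))
    (hr : ∀ (m : M) (a b : A), r (r m a) b = r m (a * b))
    (hlr : ∀ (a : A) (m : M) (b : A), r (l a m) b = l a (r m b))
    -- T is a relative Rota–Baxter operator:
    (hT : ∀ m n : M, T m * T n = T (l (T m) n + r m (T n)))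
    (μ₁ μ₁' : A →ₗ[K] A →ₗ[K] A) (l₁ l₁' : A →ₗ[K] M →ₗ[K] M)
    (r₁ r₁' : M →ₗ[K] A →ₗ[K] M) (T₁ T₁' : M →ₗ[K] A)
    -- (μ₁, l₁, r₁, T₁) determines an infinitesimal deformation:
    (hμ : ∀ x y z : A × A, dMul μ₁ (dMul μ₁ x y) z = dMul μ₁ x (dMul μ₁ y z))
    (hdl : ∀ (x y : A × A) (u : M × M), dL l l₁ (dMul μ₁ x y) u = dL l l₁ x (dL l l₁ y u))
    (hdr : ∀ (u : M × M) (x y : A × A), dR r r₁ (dR r r₁ u x) y = dR r r₁ u (dMul μ₁ x y))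
    (hdlr : ∀ (x : A × A) (u : M × M) (y : A × A),
      dR r r₁ (dL l l₁ x u) y = dL l l₁ x (dR r r₁ u y))
    (hdT : ∀ u v : M × M,
      dMul μ₁ (dOp T T₁ u) (dOp T T₁ v)
        = dOp T T₁ (dL l l₁ (dOp T T₁ u) v + dR r r₁ u (dOp T T₁ v)))
    -- (μ₁', l₁', r₁', T₁') determines an infinitesimal deformation:
    (hμ' : ∀ x y z : A × A, dMul μ₁' (dMul μ₁' x y) z = dMul μ₁' x (dMul μ₁' y z))
    (hdl' : ∀ (x y : A × A) (u : M × M),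
      dL l l₁' (dMul μ₁' x y) u = dL l l₁' x (dL l l₁' y u))
    (hdr' : ∀ (u : M × M) (x y : A × A),
      dR r r₁' (dR r r₁' u x) y = dR r r₁' u (dMul μ₁' x y))
    (hdlr' : ∀ (x : A × A) (u : M × M) (y : A × A),
      dR r r₁' (dL l l₁' x u) y = dL l l₁' x (dR r r₁' u y))
    (hdT' : ∀ u v : M × M,
      dMul μ₁' (dOp T T₁' u) (dOp T T₁' v)
        = dOp T T₁' (dL l l₁' (dOp T T₁' u) v + dR r r₁' u (dOp T T₁' v)))
    (φ₁ : A →ₗ[K] A) (ψ₁ : M →ₗ[K] M) :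
    -- (Φ, Ψ) is an isomorphism of the two K[ε]-relative Rota–Baxter algebras ...
    ((∀ x y : A × A, dPhi φ₁ (dMul μ₁ x y) = dMul μ₁' (dPhi φ₁ x) (dPhi φ₁ y)) ∧
      (∀ (x : A × A) (u : M × M), dPhi ψ₁ (dL l l₁ x u) = dL l l₁' (dPhi φ₁ x) (dPhi ψ₁ u)) ∧
      (∀ (u : M × M) (x : A × A), dPhi ψ₁ (dR r r₁ u x) = dR r r₁' (dPhi ψ₁ u) (dPhi φ₁ x)) ∧
      (∀ u : M × M, dOp T T₁' (dPhi ψ₁ u) = dPhi φ₁ (dOp T T₁ u)))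
    -- ... iff the cocycles differ by the coboundary of (φ₁, ψ₁):
    ↔ ((∀ a b : A, μ₁ a b - μ₁' a b = a * φ₁ b - φ₁ (a * b) + φ₁ a * b) ∧
        (∀ (a : A) (m : M), ψ₁ (l a m) + l₁ a m = l₁' a m + l (φ₁ a) m + l a (ψ₁ m)) ∧
        (∀ (m : M) (a : A), ψ₁ (r m a) + r₁ m a = r₁' m a + r (ψ₁ m) a + r m (φ₁ a)) ∧
        (∀ m : M, T₁ m + φ₁ (T m) = T₁' m + T (ψ₁ m))) := by
  constructor
  · rintro ⟨h1, h2, h3, h4⟩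
    refine ⟨fun a b => ?_, fun a m => ?_, fun m a => ?_, fun m => ?_⟩
    · have h := congrArg Prod.snd (h1 (a, 0) (b, 0))
      simp [dMul, dPhi] at h
      linear_combination (norm := abel) h
    · have h := congrArg Prod.snd (h2 (a, 0) (m, 0))
      simp [dL, dPhi] at h
      linear_combination (norm := abel) h
    · have h := congrArg Prod.snd (h3 (m, 0) (a, 0))
      simp [dR, dPhi] at h
      linear_combination (norm := abel) h
    · have h := congrArg Prod.snd (h4 (m, 0))
      simp [dOp, dPhi] at h
      linear_combination (norm := abel) h.symm
  · rintro ⟨h1, h2, h3, h4⟩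
    refine ⟨fun x y => ?_, fun x u => ?_, fun u x => ?_, fun u => ?_⟩
    · refine Prod.ext rfl ?_
      simp only [dMul, dPhi, map_mul, map_add]
      linear_combination (norm := noncomm_ring) h1 x.1 y.1
    · refine Prod.ext rfl ?_
      simp only [dL, dPhi, map_add, LinearMap.add_apply]
      linear_combination (norm := abel) h2 x.1 u.1
    · refine Prod.ext rfl ?_
      simp only [dR, dPhi, map_add, LinearMap.add_apply]
      linear_combination (norm := abel) h3 u.1 x.1
    · refine Prod.ext rfl ?_
      simp only [dOp, dPhi, map_add]
      linear_combination (norm := abel) (h4 u.1).symm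

end
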